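/- arXiv:1509.00168 — 6 statements merged into one kernel-verified Lean document; each statement's English description precedes it below -/
import Mathlib

section
/- For the second-order system obtained by differentiating a planar autonomous system, the deviation curvature matrix is given by P(x,y) = (1/2)·M(x,y) + (1/4)·J(x)², where M(x,y) is the 2×2 matrix whose first row is the transpose of (Hess f)(x)·y and whose second row is the transpose of (Hess g)(x)·y, and J(x) is the Jacobian matrix of (f,g) at x. (Proposition 3.1.) -/
open Matrix

/-! With `F = (f, g)`, the spray `G = -½ J y` is linear in `y` and `N = -½ J`, so
`-2 ∂ⱼGⁱ = Σₖ ∂ⱼ∂ₖFⁱ yᵏ` and `Σₗ yˡ ∂ₗNⁱⱼ = -½ Σₗ ∂ₗ∂ⱼFⁱ yˡ`. By the symmetry of second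
derivatives of a `C²` function these add up to `½ (Hess Fⁱ · y)ⱼ`, and `N² = ¼ J²`. -/

noncomputable def pd (i : Fin 2) (φ : (Fin 2 → ℝ) → ℝ) (x : Fin 2 → ℝ) : ℝ :=
  fderiv ℝ φ x (Pi.single i 1)

section PartialDerivatives

variable {φ : (Fin 2 → ℝ) → ℝ} {x : Fin 2 → ℝ}

lemma pd_const_mul (hφ : DifferentiableAt ℝ φ x) (c : ℝ) (j : Fin 2) :
    pd j (fun x' => c * φ x') x = c * pd j φ x := by
  simp [pd, fderiv_const_mul hφ]

lemma pd_sum_mul_const {ι : Type*} (s : Finset ι) {u : ι → (Fin 2 → ℝ) → ℝ}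
    (hu : ∀ k ∈ s, DifferentiableAt ℝ (u k) x) (c : ι → ℝ) (j : Fin 2) :
    pd j (fun x' => ∑ k ∈ s, u k x' * c k) x = ∑ k ∈ s, pd j (u k) x * c k := by
  rw [pd, fderiv_fun_sum fun k hk => (hu k hk).mul_const (c k), _root_.sum_apply]
  refine Finset.sum_congr rfl fun k hk => ?_
  simp [fderiv_mul_const (hu k hk), pd, mul_comm]

lemma differentiableAt_pd (h : DifferentiableAt ℝ (fderiv ℝ φ) x) (i : Fin 2) :
    DifferentiableAt ℝ (pd i φ) x :=
  h.clm_apply (differentiableAt_const _)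

lemma pd_pd (h : DifferentiableAt ℝ (fderiv ℝ φ) x) (i j : Fin 2) :
    pd j (pd i φ) x = fderiv ℝ (fderiv ℝ φ) x (Pi.single j 1) (Pi.single i 1) := by
  change fderiv ℝ (fun x' => fderiv ℝ φ x' (Pi.single i 1)) x _ = _
  simp [fderiv_clm_apply h (differentiableAt_const _)]

lemma ContDiff.differentiableAt_fderiv (hφ : ContDiff ℝ 2 φ) :
    DifferentiableAt ℝ (fderiv ℝ φ) x :=
  ((hφ.fderiv_right (m := 1) (by norm_num)).differentiable (by norm_num)) x

lemma pd_pd_comm (hφ : ContDiff ℝ 2 φ) (i j : Fin 2) :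
    pd j (pd i φ) x = pd i (pd j φ) x := by
  rw [pd_pd hφ.differentiableAt_fderiv, pd_pd hφ.differentiableAt_fderiv]
  exact (hφ.contDiffAt.isSymmSndFDerivAt (by simp)) _ _

end PartialDerivatives

lemma neg_two_mul_pd_spray_add_sum_mul_pd_connection {φ : (Fin 2 → ℝ) → ℝ}
    (hφ : ContDiff ℝ 2 φ) (x y : Fin 2 → ℝ) (j : Fin 2) :
    -2 * pd j (fun x' => -(1/2) * ∑ k, pd k φ x' * y k) x
      + ∑ l, y l * pd l (fun x' => -(1/2) * pd j φ x') x
      = (1/2) * ∑ k, pd k (pd j φ) x * y k := by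
  have hpd : ∀ i, DifferentiableAt ℝ (pd i φ) x :=
    differentiableAt_pd hφ.differentiableAt_fderiv
  have hspray : pd j (fun x' => -(1/2) * ∑ k, pd k φ x' * y k) x
      = -(1/2) * ∑ k, pd k (pd j φ) x * y k := by
    rw [pd_const_mul (DifferentiableAt.fun_sum fun k _ => (hpd k).mul_const (y k)),
      pd_sum_mul_const _ fun k _ => hpd k]
    simp only [pd_pd_comm hφ j]
  have hconnection : ∑ l, y l * pd l (fun x' => -(1/2) * pd j φ x') x
      = -(1/2) * ∑ k, pd k (pd j φ) x * y k := by
    simp only [pd_const_mul (hpd j), Finset.mul_sum]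
    exact Finset.sum_congr rfl fun _ _ => by ring
  rw [hspray, hconnection]
  ring

/-- Proposition 3.1: for the second-order system obtained by differentiating the planar
system `ẋ¹ = f(x)`, `ẋ² = g(x)` (so `(G¹,G²)(x,y) = −(1/2)·J(x)·y`, nonlinear connection
`Nⁱⱼ = ∂Gⁱ/∂yʲ = −(1/2)Jⁱⱼ`), the deviation curvature matrix
`Pⁱⱼ = −2·∂Gⁱ/∂xʲ + Σₗ yˡ·∂Nⁱⱼ/∂xˡ + Σₗ Nⁱₗ·Nˡⱼ` satisfies
`P(x,y) = (1/2)·M(x,y) + (1/4)·J(x)²`, where the rows of `M(x,y)` are the transposes of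
`(Hess f)(x)·y` and `(Hess g)(x)·y`. -/
theorem deviation_curvature_of_planar_system
    (f g : (Fin 2 → ℝ) → ℝ) (hf : ContDiff ℝ 2 f) (hg : ContDiff ℝ 2 g)
    (J : (Fin 2 → ℝ) → Matrix (Fin 2) (Fin 2) ℝ)
    (hJ : ∀ x, J x = !![pd 0 f x, pd 1 f x; pd 0 g x, pd 1 g x])
    (G : (Fin 2 → ℝ) → (Fin 2 → ℝ) → Fin 2 → ℝ)
    (hG : ∀ x y i, G x y i = -(1/2) * ∑ j, J x i j * y j)
    (N : (Fin 2 → ℝ) → Matrix (Fin 2) (Fin 2) ℝ)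
    (hN : ∀ x i j, N x i j = -(1/2) * J x i j)
    (P : (Fin 2 → ℝ) → (Fin 2 → ℝ) → Matrix (Fin 2) (Fin 2) ℝ)
    (hP : ∀ x y i j, P x y i j =
      -2 * pd j (fun x' => G x' y i) x
      + ∑ l, y l * pd l (fun x' => N x' i j) x
      + ∑ l, N x i l * N x l j)
    (Hessf Hessg : (Fin 2 → ℝ) → Matrix (Fin 2) (Fin 2) ℝ)
    (hHessf : ∀ x i j, Hessf x i j = pd j (fun x' => pd i f x') x)
    (hHessg : ∀ x i j, Hessg x i j = pd j (fun x' => pd i g x') x)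
    (M : (Fin 2 → ℝ) → (Fin 2 → ℝ) → Matrix (Fin 2) (Fin 2) ℝ)
    (hM : ∀ x y, M x y = !![(Hessf x *ᵥ y) 0, (Hessf x *ᵥ y) 1;
                            (Hessg x *ᵥ y) 0, (Hessg x *ᵥ y) 1]) :
    ∀ x y, P x y = (1/2 : ℝ) • M x y + (1/4 : ℝ) • (J x * J x) := by
  intro x y
  set F : Fin 2 → (Fin 2 → ℝ) → ℝ := ![f, g]
  have hF : ∀ i, ContDiff ℝ 2 (F i) := Fin.forall_fin_two.2 ⟨hf, hg⟩
  have hJF : ∀ x i j, J x i j = pd j (F i) x := by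
    intro x i j; fin_cases i <;> fin_cases j <;> simp [hJ, F]
  have hMF : ∀ i j, M x y i j = ∑ k, pd k (pd j (F i)) x * y k := by
    intro i j; fin_cases i <;> fin_cases j <;> simp [hM, hHessf, hHessg, mulVec, dotProduct, F]
  have hNN : N x * N x = (1/4 : ℝ) • (J x * J x) := by
    have hNJ : N x = (-(1/2) : ℝ) • J x := by ext i j; simp [hN]
    rw [hNJ, smul_mul_smul]; norm_num
  ext i j
  rw [hP, ← mul_apply (M := N x), hNN, Matrix.add_apply, Matrix.smul_apply (A := M x y), hMF]
  simp only [hG, hN, hJF, smul_eq_mul]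
  rw [neg_two_mul_pd_spray_add_sum_mul_pd_connection (hF i)]
end

section
/- Let A be a real 2×2 matrix and let P = (1/4)·A², viewed as a complex matrix by mapping entries through the embedding ℝ → ℂ. If every eigenvalue μ ∈ spectrum ℂ of P has strictly negative real part (Jacobi stability of the fixed point), then Δ := (trace A)² − 4·det A < 0. (Theorem 4.1, part 1.) -/
open Polynomial

lemma real_eig_mem_spectrum (A : Matrix (Fin 2) (Fin 2) ℝ) (lam : ℝ)
    (h : lam ^ 2 - Matrix.trace A * lam + A.det = 0) :
    (lam : ℂ) ∈ spectrum ℂ (A.map Complex.ofReal) := by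
  rw [spectrum.mem_iff]
  intro hu
  rw [Matrix.isUnit_iff_isUnit_det, isUnit_iff_ne_zero] at hu
  apply hu
  have : (algebraMap ℂ (Matrix (Fin 2) (Fin 2) ℂ) (lam : ℂ) - A.map Complex.ofReal) =
      Matrix.of ![![(lam : ℂ) - A 0 0, -A 0 1], ![-A 1 0, (lam : ℂ) - A 1 1]] := by
    ext i j
    rw [Algebra.algebraMap_eq_smul_one]
    fin_cases i <;> fin_cases j <;>
      simp [Matrix.one_apply, Matrix.map_apply]
  rw [this, Matrix.det_fin_two]
  have ht : Matrix.trace A = A 0 0 + A 1 1 := by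
    simp [Matrix.trace_fin_two]
  have hd : A.det = A 0 0 * A 1 1 - A 0 1 * A 1 0 := Matrix.det_fin_two A
  rw [ht, hd] at h
  have h' : (lam : ℂ) ^ 2 - ((A 0 0 : ℂ) + A 1 1) * lam +
      ((A 0 0 : ℂ) * A 1 1 - A 0 1 * A 1 0) = 0 := by
    exact_mod_cast congrArg (Complex.ofReal) h
  simp only [Matrix.of_apply, Matrix.cons_val', Matrix.cons_val_zero, Matrix.cons_val_one,
    Matrix.head_cons, Matrix.empty_val', Matrix.cons_val_fin_one, Matrix.head_fin_const]
  ring_nf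
  ring_nf at h'
  linear_combination h'

/-- Theorem 4.1, part 1: if the fixed point with Jacobian `A` is Jacobi stable,
i.e. every complex eigenvalue of the deviation curvature matrix `P = (1/4)·A²`
has strictly negative real part, then `Δ = (trace A)² − 4·det A < 0`. -/
theorem jacobi_stable_implies_discriminant_neg (A : Matrix (Fin 2) (Fin 2) ℝ)
    (P : Matrix (Fin 2) (Fin 2) ℂ)
    (hP : P = (1/4 : ℂ) • (A.map Complex.ofReal * A.map Complex.ofReal))
    (hstab : ∀ μ ∈ spectrum ℂ P, μ.re < 0) :
    (Matrix.trace A)^2 - 4 * A.det < 0 := by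
  by_contra hΔ
  push_neg at hΔ
  set t := Matrix.trace A
  set d := A.det
  set Δ := t ^ 2 - 4 * d with hΔdef
  have hΔ0 : 0 ≤ Δ := hΔ
  set lam := (t + Real.sqrt Δ) / 2 with hlam
  have hsq : Real.sqrt Δ ^ 2 = Δ := Real.sq_sqrt hΔ0
  have hroot : lam ^ 2 - t * lam + d = 0 := by
    have h1 : lam ^ 2 - t * lam + d = (Real.sqrt Δ ^ 2 - (t ^ 2 - 4 * d)) / 4 := by
      rw [hlam]; ring
    rw [h1, hsq, hΔdef]
    ring
  have hmem := real_eig_mem_spectrum A lam hroot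
  set M := A.map Complex.ofReal
  have hsub := spectrum.subset_polynomial_aeval M ((C (1/4 : ℂ)) * X ^ 2)
  have hmem2 : ((1/4 : ℂ) * (lam : ℂ) ^ 2) ∈
      spectrum ℂ (aeval M ((C (1/4 : ℂ)) * X ^ 2)) := by
    apply hsub
    exact ⟨(lam : ℂ), hmem, by simp⟩
  have haev : aeval M ((C (1/4 : ℂ)) * X ^ 2) = P := by
    rw [hP]
    simp [Algebra.smul_def, sq, mul_assoc]
  rw [haev] at hmem2
  have := hstab _ hmem2
  have hre : ((1/4 : ℂ) * (lam : ℂ) ^ 2).re = lam ^ 2 / 4 := by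
    have : ((1/4 : ℂ) * (lam : ℂ) ^ 2) = ((lam ^ 2 / 4 : ℝ) : ℂ) := by
      push_cast; ring
    rw [this, Complex.ofReal_re]
  rw [hre] at this
  nlinarith [sq_nonneg lam]
end

section
/- Let A be a real 2×2 matrix whose eigenvalues are the complex conjugate pair α ± iβ with β ≠ 0, i.e., trace A = 2α and det A = α² + β². If α² − β² > 0, then some complex eigenvalue of P = (1/4)·A² has strictly positive real part, so the fixed point is Jacobi unstable. (Theorem 4.1, part 2(i).) -/
/-- Theorem 4.1, part 2(i): if the eigenvalues of the real 2×2 matrix `A` are the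
complex conjugate pair `α ± iβ`, `β ≠ 0` (i.e. `trace A = 2α`, `det A = α² + β²`),
and `α² − β² > 0`, then some complex eigenvalue of `P = (1/4)·A²` has strictly
positive real part, so the fixed point is Jacobi unstable. -/
theorem jacobi_unstable_of_focus (A : Matrix (Fin 2) (Fin 2) ℝ)
    (α β : ℝ) (hβ : β ≠ 0)
    (htr : Matrix.trace A = 2 * α) (hdet : A.det = α^2 + β^2)
    (P : Matrix (Fin 2) (Fin 2) ℂ)
    (hP : P = (1/4 : ℂ) • (A.map Complex.ofReal * A.map Complex.ofReal))
    (h : α^2 - β^2 > 0) :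
    ∃ μ ∈ spectrum ℂ P, 0 < μ.re := by
  have htr' : A 0 0 + A 1 1 = 2*α := by simpa [Matrix.trace_fin_two] using htr
  have hdet' : A 0 0 * A 1 1 - A 0 1 * A 1 0 = α^2+β^2 := by
    simpa [Matrix.det_fin_two] using hdet
  have htrC : (A 0 0 : ℂ) + A 1 1 = 2*(α:ℂ) := by exact_mod_cast htr'
  have hdetC : (A 0 0 : ℂ) * A 1 1 - A 0 1 * A 1 0 = (α:ℂ)^2+(β:ℂ)^2 := by
    exact_mod_cast hdet'
  set μ : ℂ := (((α^2 - β^2)/4 : ℝ) : ℂ) + ((α*β/2 : ℝ) : ℂ) * Complex.I with hμ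
  refine ⟨μ, ?_, ?_⟩
  · rw [spectrum.mem_iff]
    intro hu
    rw [Matrix.isUnit_iff_isUnit_det, isUnit_iff_ne_zero] at hu
    apply hu
    rw [Matrix.det_fin_two]
    simp only [hP, hμ, Matrix.sub_apply, Matrix.smul_apply, Matrix.mul_apply,
      Fin.sum_univ_two, Matrix.map_apply, Matrix.algebraMap_matrix_apply,
      Matrix.one_apply, if_pos rfl, if_neg (by decide : (0:Fin 2) ≠ 1),
      if_neg (by decide : (1:Fin 2) ≠ 0), smul_eq_mul, Algebra.algebraMap_self_apply]
    push_cast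
    linear_combination
      (-((((α:ℂ)^2 - (β:ℂ)^2)/4) + ((α:ℂ)*(β:ℂ)/2) * Complex.I) *
        (((A 0 0 : ℂ) + A 1 1) + 2*(α:ℂ))/4) * htrC +
      (((((α:ℂ)^2 - (β:ℂ)^2)/4) + ((α:ℂ)*(β:ℂ)/2) * Complex.I)/2 +
        (((A 0 0 : ℂ) * A 1 1 - A 0 1 * A 1 0) + (α:ℂ)^2 + (β:ℂ)^2)/16) * hdetC +
      ((α:ℂ)*(β:ℂ)/2)^2 * Complex.I_sq
  · have : μ.re = (α^2 - β^2)/4 := by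
      simp only [hμ, Complex.add_re, Complex.ofReal_re, Complex.mul_re,
        Complex.I_re, Complex.I_im, Complex.ofReal_im]
      ring
    rw [this]
    linarith
end

section
/- Let A be a real 2×2 matrix whose eigenvalues are the complex conjugate pair α ± iβ with β ≠ 0, i.e., trace A = 2α and det A = α² + β². If α² − β² < 0, then every complex eigenvalue of P = (1/4)·A² has strictly negative real part, so the fixed point is Jacobi stable. (Theorem 4.1, part 2(ii).) -/
/-- Theorem 4.1, part 2(ii): if the eigenvalues of the real 2×2 matrix `A` are the
complex conjugate pair `α ± iβ`, `β ≠ 0` (i.e. `trace A = 2α`, `det A = α² + β²`),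
and `α² − β² < 0`, then every complex eigenvalue of `P = (1/4)·A²` has strictly
negative real part, so the fixed point is Jacobi stable. -/
theorem jacobi_stable_of_focus (A : Matrix (Fin 2) (Fin 2) ℝ)
    (α β : ℝ) (hβ : β ≠ 0)
    (htr : Matrix.trace A = 2 * α) (hdet : A.det = α^2 + β^2)
    (P : Matrix (Fin 2) (Fin 2) ℂ)
    (hP : P = (1/4 : ℂ) • (A.map Complex.ofReal * A.map Complex.ofReal))
    (h : α^2 - β^2 < 0) :
    ∀ μ ∈ spectrum ℂ P, μ.re < 0 := by
  intro μ hμ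
  rw [spectrum.mem_iff] at hμ
  have hdet0 : ((algebraMap ℂ (Matrix (Fin 2) (Fin 2) ℂ)) μ - P).det = 0 := by
    by_contra hne
    exact hμ ((Matrix.isUnit_iff_isUnit_det _).mpr (Ne.isUnit hne))
  subst hP
  rw [Matrix.trace_fin_two] at htr
  rw [Matrix.det_fin_two] at hdet
  have htr' : (A 0 0 : ℂ) + (A 1 1 : ℂ) = 2 * (α : ℂ) := by exact_mod_cast htr
  have hdet' : (A 0 0 : ℂ) * (A 1 1 : ℂ) - (A 0 1 : ℂ) * (A 1 0 : ℂ)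
      = (α : ℂ)^2 + (β : ℂ)^2 := by exact_mod_cast hdet
  simp only [Matrix.det_fin_two, Matrix.sub_apply, Matrix.smul_apply,
    Matrix.mul_apply, Fin.sum_univ_two, Matrix.map_apply,
    Matrix.algebraMap_matrix_apply, Matrix.one_apply, if_true,
    Fin.zero_eq_one_iff, Fin.one_eq_zero_iff, Nat.succ_ne_self, if_false,
    smul_eq_mul, Algebra.algebraMap_self, RingHom.id_apply] at hdet0
  have hF : μ^2 - ((((α^2 - β^2)/2 : ℝ)) : ℂ) * μ
      + ((((α^2 + β^2)^2/16 : ℝ)) : ℂ) = 0 := by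
    push_cast
    linear_combination hdet0
      + (μ * ((A 0 0 : ℂ) + (A 1 1 : ℂ) + 2 * (α : ℂ)) / 4) * htr'
      - (μ / 2) * hdet'
      - (((A 0 0 : ℂ) * (A 1 1 : ℂ) - (A 0 1 : ℂ) * (A 1 0 : ℂ)
          + (α : ℂ)^2 + (β : ℂ)^2) / 16) * hdet'
  rw [Complex.ext_iff] at hF
  obtain ⟨h1, h2⟩ := hF
  simp only [pow_two, Complex.mul_re, Complex.mul_im, Complex.add_re,
    Complex.add_im, Complex.sub_re, Complex.sub_im, Complex.ofReal_re,
    Complex.ofReal_im, Complex.zero_re, Complex.zero_im, zero_mul, mul_zero,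
    sub_zero, zero_sub, add_zero, zero_add] at h1 h2
  set x := μ.re
  set y := μ.im
  have hβ2 : 0 < β^2 := by positivity
  by_cases hy : y = 0
  · rw [hy] at h1
    nlinarith [sq_nonneg x, sq_nonneg (α^2+β^2), sq_nonneg β, sq_nonneg (x + (α^2+β^2)/4)]
  · have hx : x = (α^2 - β^2)/4 := by
      have : y * (2 * x - (α^2 - β^2)/2) = 0 := by linarith [h2]
      rcases mul_eq_zero.mp this with h' | h'
      · exact absurd h' hy
      · linarith
    rw [hx]
    nlinarith [sq_nonneg β]
end

section
/- For the point-particle Hamiltonian system, both eigenvalues of the deviation curvature matrix P(x,y) = ((−V''(x¹)/(4m), 0), (−(1/2)·V''(x¹)·y¹, −V''(x¹)/(4m))) are equal to λ₁ = λ₂ = −V''(x¹)/(4m); consequently, the eigenvalues of P(x,y) are strictly negative for all (x,y) ∈ ℝ²×ℝ² if and only if V''(x) > 0 for all x ∈ ℝ. (Theorem 5.1.) -/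
open Matrix

/-- Theorem 5.1: for the point-particle Hamiltonian system, both eigenvalues (roots of
`λ² − (trace P)·λ + det P = 0`) of the deviation curvature matrix
`P(x,y) = ((−V''(x¹)/(4m), 0), (−(1/2)V''(x¹)y¹, −V''(x¹)/(4m)))` equal
`−V''(x¹)/(4m)`; consequently, the eigenvalues of `P(x,y)` are strictly negative for
all `(x,y)` if and only if `V''(x) > 0` for all `x`. -/
theorem jacobi_stability_point_particle
    (V : ℝ → ℝ) (hV : ContDiff ℝ 2 V) (m : ℝ) (hm : 0 < m)
    (P : (Fin 2 → ℝ) → (Fin 2 → ℝ) → Matrix (Fin 2) (Fin 2) ℝ)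
    (hP : ∀ x y, P x y =
      !![-(deriv (deriv V) (x 0)) / (4 * m), 0;
         -(1/2) * deriv (deriv V) (x 0) * y 0, -(deriv (deriv V) (x 0)) / (4 * m)]) :
    (∀ x y : Fin 2 → ℝ, ∀ lam : ℝ,
      lam^2 - Matrix.trace (P x y) * lam + (P x y).det = 0 ↔
        lam = -(deriv (deriv V) (x 0)) / (4 * m)) ∧
    ((∀ x y : Fin 2 → ℝ, ∀ lam : ℝ,
        lam^2 - Matrix.trace (P x y) * lam + (P x y).det = 0 → lam < 0) ↔
      ∀ x : ℝ, deriv (deriv V) x > 0) := by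
  have key : ∀ x y : Fin 2 → ℝ, ∀ lam : ℝ,
      lam^2 - Matrix.trace (P x y) * lam + (P x y).det = 0 ↔
        lam = -(deriv (deriv V) (x 0)) / (4 * m) := by
    intro x y lam
    rw [hP]
    set a := -(deriv (deriv V) (x 0)) / (4 * m) with ha
    have htr : Matrix.trace !![a, 0; -(1/2) * deriv (deriv V) (x 0) * y 0, a] = a + a := by
      simp [Matrix.trace_fin_two]
    have hdet : (!![a, 0; -(1/2) * deriv (deriv V) (x 0) * y 0, a]).det = a * a := by
      simp [Matrix.det_fin_two]
    rw [htr, hdet]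
    constructor
    · intro h
      have : (lam - a)^2 = 0 := by ring_nf; ring_nf at h; linarith
      have := pow_eq_zero_iff (n := 2) (by norm_num) |>.mp this
      linarith
    · intro h; subst h; ring
  refine ⟨key, ?_⟩
  constructor
  · intro h x
    have := h (fun _ => x) 0 (-(deriv (deriv V) x) / (4 * m))
      (((key (fun _ => x) 0 _).mpr rfl))
    have h4m : 0 < 4 * m := by linarith
    rw [div_neg_iff] at this
    rcases this with ⟨h1, h2⟩ | ⟨h1, h2⟩
    · linarith
    · linarith
  · intro h x y lam hl
    have := (key x y lam).mp hl
    subst this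
    have h1 := h (x 0)
    have h4m : 0 < 4 * m := by linarith
    apply div_neg_of_neg_of_pos (by linarith) h4m
end

section
/- Let m > 0, let c = V''(x₀) > 0, let ω = √(c/m), and let ξ₁₀, ξ₂₀ ∈ ℝ. Define ξ¹(t) = (1/c)·[√m·ξ₁₀·√c·sin(ωt) − ξ₂₀·cos(ωt) + ξ₂₀] and ξ²(t) = m·ξ₁₀·(cos(ωt) − 1) + (√m·ξ₂₀/√c)·sin(ωt). Then ξ¹ and ξ² are twice differentiable and satisfy the geodesic deviation equations (ξ¹)''(t) − (1/m)·(ξ²)'(t) = 0 and (ξ²)''(t) + c·(ξ¹)'(t) = 0 for all t ∈ ℝ, together with the initial conditions ξ¹(0) = 0, ξ²(0) = 0, (ξ¹)'(0) = ξ₁₀, (ξ²)'(0) = ξ₂₀. -/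
/-!
Both components have the form `p sin (ω t) + q cos (ω t) + r`, a family closed under
differentiation, so the equations and initial conditions reduce to identities between
coefficients. Writing `m = a²` and `c = b²` removes the square roots (`ω = b / a`) and makes
these identities rational in `a` and `b`.
-/

open Real

noncomputable def harmonicOscillation (ω p q r t : ℝ) : ℝ :=
  p * sin (ω * t) + q * cos (ω * t) + r

section HarmonicOscillation

variable (ω p q r : ℝ)

theorem hasDerivAt_harmonicOscillation (t : ℝ) :
    HasDerivAt (harmonicOscillation ω p q r)
      (harmonicOscillation ω (-(q * ω)) (p * ω) 0 t) t := by
  have hlin : HasDerivAt (fun s : ℝ => ω * s) ω t := by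
    simpa using (hasDerivAt_id t).const_mul ω
  have hsin := ((hasDerivAt_sin (ω * t)).comp t hlin).const_mul p
  have hcos := ((hasDerivAt_cos (ω * t)).comp t hlin).const_mul q
  refine ((hsin.add hcos).add_const r).congr_deriv ?_
  rw [harmonicOscillation]
  ring

theorem differentiable_harmonicOscillation : Differentiable ℝ (harmonicOscillation ω p q r) :=
  fun t => (hasDerivAt_harmonicOscillation ω p q r t).differentiableAt

theorem deriv_harmonicOscillation :
    deriv (harmonicOscillation ω p q r) = harmonicOscillation ω (-(q * ω)) (p * ω) 0 :=
  funext fun t => (hasDerivAt_harmonicOscillation ω p q r t).deriv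

end HarmonicOscillation

/-- The explicit solution of the geodesic deviation equations of the point-particle
Hamiltonian system at a critical point: with `m > 0`, `c = V''(x₀) > 0`, `ω = √(c/m)`,
the functions `ξ¹(t) = (1/c)[√m·ξ₁₀·√c·sin(ωt) − ξ₂₀·cos(ωt) + ξ₂₀]` and
`ξ²(t) = m·ξ₁₀·(cos(ωt) − 1) + (√m·ξ₂₀/√c)·sin(ωt)` are twice differentiable, satisfy
`(ξ¹)'' − (1/m)(ξ²)' = 0`, `(ξ²)'' + c·(ξ¹)' = 0`, and the initial conditions
`ξ¹(0) = 0`, `ξ²(0) = 0`, `(ξ¹)'(0) = ξ₁₀`, `(ξ²)'(0) = ξ₂₀`. -/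
theorem geodesic_deviation_solution
    (m c : ℝ) (hm : 0 < m) (hc : 0 < c)
    (ω : ℝ) (hω : ω = Real.sqrt (c / m))
    (ξ10 ξ20 : ℝ) (ξ1 ξ2 : ℝ → ℝ)
    (hξ1 : ∀ t, ξ1 t = (1 / c) *
      (Real.sqrt m * ξ10 * Real.sqrt c * Real.sin (ω * t)
        - ξ20 * Real.cos (ω * t) + ξ20))
    (hξ2 : ∀ t, ξ2 t = m * ξ10 * (Real.cos (ω * t) - 1)
        + (Real.sqrt m * ξ20 / Real.sqrt c) * Real.sin (ω * t)) :
    (∀ t : ℝ, DifferentiableAt ℝ ξ1 t ∧ DifferentiableAt ℝ (deriv ξ1) t) ∧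
    (∀ t : ℝ, DifferentiableAt ℝ ξ2 t ∧ DifferentiableAt ℝ (deriv ξ2) t) ∧
    (∀ t : ℝ, deriv (deriv ξ1) t - (1 / m) * deriv ξ2 t = 0) ∧
    (∀ t : ℝ, deriv (deriv ξ2) t + c * deriv ξ1 t = 0) ∧
    ξ1 0 = 0 ∧ ξ2 0 = 0 ∧ deriv ξ1 0 = ξ10 ∧ deriv ξ2 0 = ξ20 := by
  obtain ⟨a, ha, rfl⟩ : ∃ a, 0 < a ∧ m = a ^ 2 :=
    ⟨√m, sqrt_pos.2 hm, (sq_sqrt hm.le).symm⟩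
  obtain ⟨b, hb, rfl⟩ : ∃ b, 0 < b ∧ c = b ^ 2 :=
    ⟨√c, sqrt_pos.2 hc, (sq_sqrt hc.le).symm⟩
  rw [← div_pow, sqrt_sq (div_pos hb ha).le] at hω
  subst hω
  have hξ1_eq : ξ1 =
      harmonicOscillation (b / a) (a * ξ10 / b) (-ξ20 / b ^ 2) (ξ20 / b ^ 2) := by
    funext t
    rw [hξ1, sqrt_sq ha.le, sqrt_sq hb.le, harmonicOscillation]
    field_simp
    ring
  have hξ2_eq : ξ2 =
      harmonicOscillation (b / a) (a * ξ20 / b) (a ^ 2 * ξ10) (-(a ^ 2 * ξ10)) := by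
    funext t
    rw [hξ2, sqrt_sq ha.le, sqrt_sq hb.le, harmonicOscillation]
    ring
  subst hξ1_eq hξ2_eq
  simp only [deriv_harmonicOscillation,
    (differentiable_harmonicOscillation _ _ _ _).differentiableAt, and_self, implies_true, true_and]
  refine ⟨fun t => ?_, fun t => ?_, ?_, ?_, ?_, ?_⟩ <;>
    simp only [harmonicOscillation, mul_zero, sin_zero, cos_zero] <;> field_simp <;> ring
end
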